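/- arXiv:2311.17860 — 3 statements merged into one kernel-verified Lean document; each statement's English description precedes it below -/
import Mathlib

section
/- (Transitivity of inside.) For all points u, v, w, x, y: if inside(u,v,w,x) (x lies in the triangle Δuvw) and inside(u,v,x,y) (y lies in the triangle Δuvx), then inside(u,v,w,y) (y lies in the triangle Δuvw). -/
/-- Points are elements of ℝ². -/
abbrev Pt := ℝ × ℝ

/-- det((a,b),(c,d)) = a·d − b·c. -/
def pdet (p q : Pt) : ℝ := p.1 * q.2 - p.2 * q.1

/-- `left u v w`: w lies strictly to the left of the oriented line through u and v,
or on the open ray from u through v. -/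
def left (u v w : Pt) : Prop :=
  0 < pdet (v - u) (w - u) ∨ ∃ t : ℝ, 0 < t ∧ w - u = t • (v - u)

/-- `inter u v w x`: the closed segments uv and wx share a point that is not an
endpoint of both. -/
def inter (u v w x : Pt) : Prop :=
  ¬(u = w ∧ v = x) ∧ ¬(u = x ∧ v = w) ∧
  ((left u v w ∧ left v u x) ∨ (left u v x ∧ left v u w)) ∧
  ((left w x u ∧ left x w v) ∨ (left w x v ∧ left x w u))

/-- `inside u v w x`: x lies in the closed triangle Δuvw but is distinct from u, v, w. -/
def inside (u v w x : Pt) : Prop := left u v x ∧ left v w x ∧ left w u x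

/-- `deleting E F u v w x`: the edge wx prohibits that uv is in F. -/
def deleting (E F : Pt → Pt → Prop) (u v w x : Pt) : Prop :=
  E u v ∧ E w x ∧ inter u v w x ∧ E u w ∧ E v w ∧
    ((¬ E u x ∧ ¬ E v x) ∨ F w x)

/-- A finite path a = p₀, p₁, …, pₙ = b with R(pᵢ, pᵢ₊₁) for all i < n. -/
def FPath (R : Pt → Pt → Prop) (a b : Pt) : Prop :=
  ∃ (n : ℕ) (p : ℕ → Pt), p 0 = a ∧ p n = b ∧ ∀ i < n, R (p i) (p (i + 1))

/-- `R` connects `V`: any two vertices are joined by a finite `R`-path. -/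
def Connects (R : Pt → Pt → Prop) (V : Pt → Prop) : Prop :=
  ∀ a b, V a → V b → FPath R a b

/-!
`left a b c` says that `c - a` lies in the cone `LeftOf (b - a)`: the open half-plane to the left
of `b - a` together with the open ray through it. This cone is closed under addition and positive
scaling, and for `b ≠ a` it contains no pair `z, -z`.

Let `y` lie in `Δuvx` with `x` in `Δuvw`. If `y` is strictly left of the edge `vx` (resp. `xu`),
then `x` is off the line `uv`, and a Plücker-type identity writes the signed area of `vwy`
(resp. `wuy`) times that of `uvx` as a sum of products of nonnegative areas, one of them positive.
Otherwise `y` lies on the ray `vx` (resp. `xu`), and the cone properties at `v` (resp. at `u`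
and `w`) apply.
-/

/-- `left u v w` is definitionally `LeftOf (v - u) (w - u)`. -/
def LeftOf (d z : Pt) : Prop :=
  0 < pdet d z ∨ ∃ t : ℝ, 0 < t ∧ z = t • d

section LeftOf

variable {d z z' : Pt}

lemma LeftOf.pdet_nonneg (h : LeftOf d z) : 0 ≤ pdet d z := by
  rcases h with h | ⟨t, -, rfl⟩
  · exact h.le
  · apply le_of_eq
    simp only [pdet, Prod.smul_fst, Prod.smul_snd, smul_eq_mul]; ring

lemma leftOf_self (d : Pt) : LeftOf d d := Or.inr ⟨1, one_pos, (one_smul ℝ d).symm⟩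

lemma LeftOf.smul (h : LeftOf d z) {c : ℝ} (hc : 0 < c) : LeftOf d (c • z) := by
  rcases h with h | ⟨t, ht, rfl⟩
  · refine Or.inl ?_
    have : pdet d (c • z) = c * pdet d z := by
      simp only [pdet, Prod.smul_fst, Prod.smul_snd, smul_eq_mul]; ring
    rw [this]; positivity
  · exact Or.inr ⟨c * t, by positivity, smul_smul c t d⟩

lemma LeftOf.add (h : LeftOf d z) (h' : LeftOf d z') : LeftOf d (z + z') := by
  have hdet : pdet d (z + z') = pdet d z + pdet d z' := by
    simp only [pdet, Prod.fst_add, Prod.snd_add]; ring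
  rcases h with h | ⟨t, ht, rfl⟩
  · exact Or.inl (by linarith [h'.pdet_nonneg])
  rcases h' with h' | ⟨t', ht', rfl⟩
  · exact Or.inl (by linarith [((leftOf_self d).smul ht).pdet_nonneg])
  · exact Or.inr ⟨t + t', by positivity, (add_smul t t' d).symm⟩

lemma not_leftOf_neg (hd : d ≠ 0) (h : LeftOf d z) : ¬ LeftOf d (-z) := by
  intro h'
  have hneg : pdet d (-z) = -pdet d z := by
    simp only [pdet, Prod.fst_neg, Prod.snd_neg]; ring
  rcases h with h | ⟨t, ht, rfl⟩
  · linarith [h'.pdet_nonneg]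
  rcases h' with h' | ⟨t', ht', h'⟩
  · linarith [((leftOf_self d).smul ht).pdet_nonneg]
  · have : (t + t') • d = 0 := by rw [add_smul, ← h', add_neg_cancel]
    exact hd ((smul_eq_zero.mp this).resolve_left (by positivity))

lemma LeftOf.pos_of_smul (hd : d ≠ 0) (h : LeftOf d z) {c : ℝ} (hc : LeftOf d (c • z)) : 0 < c := by
  by_contra! hc0
  refine not_leftOf_neg hd hc ?_
  rcases hc0.lt_or_eq with hneg | rfl
  · simpa [neg_smul] using h.smul (neg_pos.mpr hneg)
  · simpa using hc

end LeftOf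

section Inside

variable {u v w x y : Pt}

lemma pdet_pos_of_inside_of_pdet_pos (hx : left u v x) (hy : inside u v x y)
    (h : 0 < pdet (x - v) (y - v) ∨ 0 < pdet (u - x) (y - x)) : 0 < pdet (v - u) (x - u) := by
  rcases hx with hx | ⟨s, hs, hxs⟩
  · exact hx
  obtain rfl : x = s • (v - u) + u := sub_eq_iff_eq_add.mp hxs
  set P := pdet (v - u) (y - u)
  have hv : pdet (s • (v - u) + u - v) (y - v) = (s - 1) * P := by
    simp only [P, pdet, Prod.fst_add, Prod.snd_add, Prod.fst_sub, Prod.snd_sub, Prod.smul_fst,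
      Prod.smul_snd, smul_eq_mul]; ring
  have hu : pdet (u - (s • (v - u) + u)) (y - (s • (v - u) + u)) = -s * P := by
    simp only [P, pdet, Prod.fst_add, Prod.snd_add, Prod.fst_sub, Prod.snd_sub, Prod.smul_fst,
      Prod.smul_snd, smul_eq_mul]; ring
  have hP : P = 0 := by
    nlinarith [LeftOf.pdet_nonneg hy.1, LeftOf.pdet_nonneg hy.2.2]
  rw [hv, hu, hP] at h
  simp at h

/-- The bracket is twice the signed area of `Δuvw`, split at `x`. -/
lemma pdet_identity_vw (u v w x y : Pt) :
    pdet (v - u) (x - u) * pdet (w - v) (y - v) =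
      pdet (x - v) (y - v) * (pdet (v - u) (x - u) + pdet (w - v) (x - v) + pdet (u - w) (x - w)) +
        pdet (v - u) (y - u) * pdet (w - v) (x - v) := by
  simp only [pdet, Prod.fst_sub, Prod.snd_sub]; ring

lemma pdet_identity_wu (u v w x y : Pt) :
    pdet (v - u) (x - u) * pdet (u - w) (y - w) =
      pdet (u - x) (y - x) * (pdet (v - u) (x - u) + pdet (w - v) (x - v) + pdet (u - w) (x - w)) +
        pdet (v - u) (y - u) * pdet (u - w) (x - w) := by
  simp only [pdet, Prod.fst_sub, Prod.snd_sub]; ring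

lemma eq_of_left_self (h : left u u x) : x = u := by
  rcases h with h | ⟨t, -, h⟩
  · simp [pdet] at h
  · simpa [sub_eq_zero] using h

lemma left_of_inside_of_inside_vw (hx : inside u v w x) (hy : inside u v x y) : left v w y := by
  obtain ⟨hux, hvx, hwx⟩ := hx
  rcases hy.2.1 with h | ⟨r, hr, hyr⟩
  · have hpos := pdet_pos_of_inside_of_pdet_pos hux hy (Or.inl h)
    have hw := LeftOf.pdet_nonneg hwx
    have hv := LeftOf.pdet_nonneg hvx
    refine Or.inl (pos_of_mul_pos_right ?_ hpos.le)
    rw [pdet_identity_vw u v w x y]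
    exact add_pos_of_pos_of_nonneg (mul_pos h (by linarith))
      (mul_nonneg (LeftOf.pdet_nonneg hy.1) hv)
  · show LeftOf (w - v) (y - v)
    rw [hyr]
    exact LeftOf.smul hvx hr

lemma left_of_inside_of_inside_wu (hx : inside u v w x) (hy : inside u v x y) : left w u y := by
  obtain ⟨hux, hvx, hwx⟩ := hx
  by_cases huv : u = v
  · subst huv
    obtain rfl := eq_of_left_self hux
    obtain rfl := eq_of_left_self hy.1
    exact hwx
  rcases hy.2.2 with h | ⟨r, hr, hyr⟩
  · have hpos := pdet_pos_of_inside_of_pdet_pos hux hy (Or.inr h)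
    have hw := LeftOf.pdet_nonneg hwx
    have hv := LeftOf.pdet_nonneg hvx
    refine Or.inl (pos_of_mul_pos_right ?_ hpos.le)
    rw [pdet_identity_wu u v w x y]
    exact add_pos_of_pos_of_nonneg (mul_pos h (by linarith))
      (mul_nonneg (LeftOf.pdet_nonneg hy.1) hw)
  · have hyu : y - u = (1 - r) • (x - u) := by linear_combination (norm := module) hyr
    have hr1 : 0 < 1 - r :=
      LeftOf.pos_of_smul (sub_ne_zero.mpr (Ne.symm huv)) hux (hyu ▸ hy.1)
    have hyw : y - w = (1 - r) • (x - w) + r • (u - w) := by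
      linear_combination (norm := module) hyr
    show LeftOf (u - w) (y - w)
    rw [hyw]
    exact (LeftOf.smul hwx hr1).add ((leftOf_self _).smul hr)

end Inside

theorem inside_transitive
    (u v w x y : Pt)
    (hx : inside u v w x) (hy : inside u v x y) :
    inside u v w y :=
  ⟨hy.1, left_of_inside_of_inside_vw hx hy, left_of_inside_of_inside_wu hx hy⟩
end

section
/- (Subtriangle property, axiom T24.) For all points u, v, w, x, y: if inside(u,v,w,x) and inside(u,v,w,y) (both x and y lie in the triangle Δuvw) and x ≠ y, then y lies in at least one of the triangles Δuvx, Δvwx, Δwux, i.e. inside(u,v,x,y) ∨ inside(v,w,x,y) ∨ inside(w,u,x,y). -/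
/-! With `orient a b p` twice the signed area of `Δabp`, the coordinates
`λ_w(p) = orient u v p`, `λ_u(p) = orient v w p`, `λ_v(p) = orient w u p` are barycentric
coordinates of `p` with respect to `Δuvw`, scaled by `orient u v w`. If `Δuvw` is non-degenerate,
choose the vertex whose coordinate minimises `λ(y) / λ(x)` among those with `λ(x) > 0`. Up to the
positive factor `orient u v w`, the cross-multiplied minimality inequalities are exactly the
orientation conditions putting `y` into the subtriangle on the opposite edge, and that subtriangle
is non-degenerate because `λ(x) > 0`. If `Δuvw` is degenerate, all five points lie on a line and
the claim becomes a statement about the order of five reals. -/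

def orient (a b c : Pt) : ℝ := pdet (b - a) (c - a)

lemma orient_rotate (a b c : Pt) : orient a b c = orient b c a := by
  simp only [orient, pdet, Prod.fst_sub, Prod.snd_sub]; ring

lemma orient_add_orient_add_orient (a b c p : Pt) :
    orient a b p + orient b c p + orient c a p = orient a b c := by
  simp only [orient, pdet, Prod.fst_sub, Prod.snd_sub]; ring

lemma orient_smul_sub (a b c p : Pt) :
    orient a b c • (p - a) = orient c a p • (b - a) + orient a b p • (c - a) := by
  ext <;> simp only [orient, pdet, Prod.fst_sub, Prod.snd_sub, Prod.smul_fst, Prod.smul_snd,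
    Prod.fst_add, Prod.snd_add, smul_eq_mul] <;> ring

lemma orient_nonneg_of_left {a b c : Pt} (h : left a b c) : 0 ≤ orient a b c := by
  rcases h with h | ⟨t, -, h⟩
  · exact h.le
  · refine (show orient a b c = 0 from ?_).ge
    simp only [orient, pdet, h, Prod.smul_fst, Prod.smul_snd, smul_eq_mul]
    ring

lemma ne_of_orient_pos {a b c : Pt} (h : 0 < orient a b c) : a ≠ b := by
  rintro rfl; simp [orient, pdet] at h

lemma ne_of_left {a b c : Pt} (h : left a b c) (hab : a ≠ b) : c ≠ a := by
  rintro rfl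
  rcases h with h | ⟨t, ht, h⟩
  · simp [pdet] at h
  · rw [sub_self, eq_comm, smul_eq_zero, sub_eq_zero] at h
    exact hab (h.resolve_left ht.ne').symm

lemma left_of_orient_nonneg {a b c p : Pt} (hD : 0 < orient a b c) (hab : 0 ≤ orient a b p)
    (hca : 0 ≤ orient c a p) (hpa : p ≠ a) : left a b p := by
  rcases hab.lt_or_eq with hab | hab
  · exact Or.inl hab
  refine Or.inr ⟨orient c a p / orient a b c, ?_, ?_⟩
  · refine div_pos (hca.lt_of_ne fun h => hpa ?_) hD
    have := orient_smul_sub a b c p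
    rw [← h, ← hab, zero_smul, zero_smul, add_zero, smul_eq_zero] at this
    exact sub_eq_zero.1 (this.resolve_left hD.ne')
  · have h := orient_smul_sub a b c p
    rw [← hab, zero_smul, add_zero] at h
    rw [div_eq_inv_mul, mul_smul, ← h, inv_smul_smul₀ hD.ne']

lemma inside_of_orient_nonneg {a b c p : Pt} (hD : 0 < orient a b c) (hab : 0 ≤ orient a b p)
    (hbc : 0 ≤ orient b c p) (hca : 0 ≤ orient c a p) (hpa : p ≠ a) (hpb : p ≠ b) (hpc : p ≠ c) :
    inside a b c p :=
  ⟨left_of_orient_nonneg hD hab hca hpa,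
    left_of_orient_nonneg (by rwa [← orient_rotate]) hbc hab hpb,
    left_of_orient_nonneg (by rwa [orient_rotate c]) hca hbc hpc⟩

lemma inside_rotate {a b c p : Pt} : inside a b c p ↔ inside b c a p :=
  ⟨fun ⟨h₁, h₂, h₃⟩ => ⟨h₂, h₃, h₁⟩, fun ⟨h₂, h₃, h₁⟩ => ⟨h₁, h₂, h₃⟩⟩

lemma orient_mul_orient_left (a b c p q : Pt) :
    orient a b c * orient b p q = orient b c q * orient a b p - orient a b q * orient b c p := by
  simp only [orient, pdet, Prod.fst_sub, Prod.snd_sub]; ring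

lemma orient_mul_orient_right (a b c p q : Pt) :
    orient a b c * orient p a q = orient c a q * orient a b p - orient a b q * orient c a p := by
  simp only [orient, pdet, Prod.fst_sub, Prod.snd_sub]; ring

lemma exists_min_ratio {ι : Type*} [Fintype ι] (l l' : ι → ℝ) (hl : ∀ i, 0 ≤ l i)
    (hl' : ∀ i, 0 ≤ l' i) (hpos : ∃ i, 0 < l i) :
    ∃ i, 0 < l i ∧ ∀ j, l' i * l j ≤ l' j * l i := by
  obtain ⟨i, hi, hmin⟩ := (Finset.univ.filter fun i => 0 < l i).exists_min_image
    (fun i => l' i / l i) (hpos.imp fun i hi => by simpa using hi)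
  rw [Finset.mem_filter] at hi
  refine ⟨i, hi.2, fun j => ?_⟩
  rcases (hl j).eq_or_lt with hj | hj
  · rw [← hj, mul_zero]; exact mul_nonneg (hl' j) (hl i)
  · have := hmin j (by simp [hj])
    rwa [div_le_div_iff₀ hi.2 hj] at this

lemma inside_of_min_ratio {u v w x y : Pt} (hD : 0 < orient u v w)
    (hy : inside u v w y) (hxy : x ≠ y) (hpos : 0 < orient u v x)
    (hvw : orient u v y * orient v w x ≤ orient v w y * orient u v x)
    (hwu : orient u v y * orient w u x ≤ orient w u y * orient u v x) :
    inside u v x y := by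
  refine inside_of_orient_nonneg hpos (orient_nonneg_of_left hy.1) ?_ ?_
    (ne_of_left hy.1 (ne_of_orient_pos hD))
    (ne_of_left hy.2.1 (ne_of_orient_pos (by rwa [← orient_rotate]))) hxy.symm
  · refine nonneg_of_mul_nonneg_right ?_ hD
    rw [orient_mul_orient_left]; linarith
  · refine nonneg_of_mul_nonneg_right ?_ hD
    rw [orient_mul_orient_right]; linarith

lemma inside_subtriangle_of_orient_pos {u v w x y : Pt} (hD : 0 < orient u v w)
    (hx : inside u v w x) (hy : inside u v w y) (hxy : x ≠ y) :
    inside u v x y ∨ inside v w x y ∨ inside w u x y := by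
  have hnonneg {p : Pt} (hp : inside u v w p) :
      ∀ i, 0 ≤ ![orient u v p, orient v w p, orient w u p] i := by
    intro i; fin_cases i <;> simp [orient_nonneg_of_left, hp.1, hp.2.1, hp.2.2]
  have hpos : ∃ i, 0 < ![orient u v x, orient v w x, orient w u x] i := by
    by_contra! h
    simp only [Fin.forall_fin_succ, Matrix.cons_val_zero, Matrix.cons_val_succ,
      Matrix.cons_val_fin_one, forall_const] at h
    linarith [orient_add_orient_add_orient u v w x]
  obtain ⟨i, hi, hmin⟩ := exists_min_ratio _ _ (hnonneg hx) (hnonneg hy) hpos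
  fin_cases i
  · exact Or.inl (inside_of_min_ratio hD hy hxy hi (hmin 1) (hmin 2))
  · exact Or.inr (Or.inl (inside_of_min_ratio (by rwa [← orient_rotate]) (inside_rotate.1 hy)
      hxy hi (hmin 2) (hmin 0)))
  · exact Or.inr (Or.inr (inside_of_min_ratio (by rwa [orient_rotate w])
      (inside_rotate.2 hy) hxy hi (hmin 0) (hmin 1)))

def LeftOnLine (a b p : ℝ) : Prop := ∃ k : ℝ, 0 < k ∧ p - a = k * (b - a)

def InsideOnLine (a b c p : ℝ) : Prop := LeftOnLine a b p ∧ LeftOnLine b c p ∧ LeftOnLine c a p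

lemma leftOnLine_iff {a b p : ℝ} :
    LeftOnLine a b p ↔ a < p ∧ a < b ∨ p < a ∧ b < a ∨ p = a ∧ b = a := by
  constructor
  · rintro ⟨k, hk, h⟩
    rcases lt_trichotomy a b with hab | rfl | hab
    · exact Or.inl ⟨by nlinarith, hab⟩
    · exact Or.inr (Or.inr ⟨by linarith, rfl⟩)
    · exact Or.inr (Or.inl ⟨by nlinarith, hab⟩)
  · rintro (⟨hp, hb⟩ | ⟨hp, hb⟩ | ⟨rfl, rfl⟩)
    · exact ⟨(p - a) / (b - a), div_pos (sub_pos.2 hp) (sub_pos.2 hb),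
        (div_mul_cancel₀ _ (sub_ne_zero.2 hb.ne')).symm⟩
    · exact ⟨(p - a) / (b - a), div_pos_of_neg_of_neg (sub_neg.2 hp) (sub_neg.2 hb),
        (div_mul_cancel₀ _ (sub_ne_zero.2 hb.ne)).symm⟩
    · exact ⟨1, one_pos, by ring⟩

lemma InsideOnLine.subtriangle {u v w x y : ℝ} (hx : InsideOnLine u v w x)
    (hy : InsideOnLine u v w y) (hxy : x ≠ y) :
    InsideOnLine u v x y ∨ InsideOnLine v w x y ∨ InsideOnLine w u x y := by
  simp only [InsideOnLine, leftOnLine_iff] at *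
  grind (splits := 40)

lemma left_add_smul_iff {o d : Pt} (hd : d ≠ 0) (a b p : ℝ) :
    left (o + a • d) (o + b • d) (o + p • d) ↔ LeftOnLine a b p := by
  have hsub (s t : ℝ) : o + s • d - (o + t • d) = (s - t) • d := by
    rw [add_sub_add_left_eq_sub, sub_smul]
  have hpdet : pdet ((b - a) • d) ((p - a) • d) = 0 := by
    simp only [pdet, Prod.smul_fst, Prod.smul_snd, smul_eq_mul]; ring
  simp only [left, hsub, hpdet, lt_irrefl, false_or, smul_smul,
    (smul_left_injective ℝ hd).eq_iff, LeftOnLine]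

lemma inside_add_smul_iff {o d : Pt} (hd : d ≠ 0) (a b c p : ℝ) :
    inside (o + a • d) (o + b • d) (o + c • d) (o + p • d) ↔ InsideOnLine a b c p := by
  simp only [inside, InsideOnLine, left_add_smul_iff hd]

lemma exists_eq_smul_of_pdet_eq_zero {p q : Pt} (hp : p ≠ 0) (h : pdet p q = 0) :
    ∃ c : ℝ, q = c • p := by
  unfold pdet at h
  by_cases h₁ : p.1 = 0
  · have h₂ : p.2 ≠ 0 := fun h₂ => hp (Prod.ext h₁ h₂)
    refine ⟨q.2 / p.2, Prod.ext ?_ ?_⟩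
    · simp only [Prod.smul_fst, smul_eq_mul, h₁, mul_zero] at h ⊢
      simpa [h₂] using h
    · simp [h₂]
  · refine ⟨q.1 / p.1, Prod.ext ?_ ?_⟩
    · simp [h₁]
    · simp only [Prod.smul_snd, smul_eq_mul]
      field_simp
      linarith

lemma inside_subtriangle_of_orient_eq_zero {u v w x y : Pt} (hD : orient u v w = 0)
    (hx : inside u v w x) (hy : inside u v w y) (hxy : x ≠ y) :
    inside u v x y ∨ inside v w x y ∨ inside w u x y := by
  have hray {p : Pt} (hp : inside u v w p) : ∃ t : ℝ, 0 < t ∧ p - u = t • (v - u) := by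
    refine hp.1.resolve_left fun h : 0 < orient u v p => ?_
    linarith [orient_add_orient_add_orient u v w p, orient_nonneg_of_left hp.2.1,
      orient_nonneg_of_left hp.2.2]
  obtain ⟨t, -, hxt⟩ := hray hx
  obtain ⟨r, -, hyr⟩ := hray hy
  have hd : v - u ≠ 0 := by
    intro h
    rw [h, smul_zero, sub_eq_zero] at hxt hyr
    exact hxy (hxt.trans hyr.symm)
  obtain ⟨c, hc⟩ := exists_eq_smul_of_pdet_eq_zero hd hD
  rw [sub_eq_iff_eq_add'] at hxt hyr hc
  subst hxt hyr hc
  have hu : u + (0 : ℝ) • (v - u) = u := by simp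
  have hv : u + (1 : ℝ) • (v - u) = v := by simp
  have hline := inside_add_smul_iff (o := u) hd
  have hx' := (hline 0 1 c t).1 (by rwa [hu, hv])
  have hy' := (hline 0 1 c r).1 (by rwa [hu, hv])
  rcases hx'.subtriangle hy' (fun h => hxy (by rw [h])) with h | h | h
  · exact Or.inl (by simpa only [hu, hv] using (hline 0 1 t r).2 h)
  · exact Or.inr (Or.inl (by simpa only [hv] using (hline 1 c t r).2 h))
  · exact Or.inr (Or.inr (by simpa only [hu] using (hline c 0 t r).2 h))

theorem inside_subtriangle
    (u v w x y : Pt)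
    (hx : inside u v w x) (hy : inside u v w y) (hxy : x ≠ y) :
    inside u v x y ∨ inside v w x y ∨ inside w u x y := by
  have hD : 0 ≤ orient u v w := by
    linarith [orient_add_orient_add_orient u v w x, orient_nonneg_of_left hx.1,
      orient_nonneg_of_left hx.2.1, orient_nonneg_of_left hx.2.2]
  rcases hD.lt_or_eq with hD | hD
  · exact inside_subtriangle_of_orient_pos hD hx hy hxy
  · exact inside_subtriangle_of_orient_eq_zero hD.symm hx hy hxy
end

section
/- (Proof Step 1.) Let V, E satisfy E1–E3, R1 and C1, and let F satisfy F1–F6. For all points u1, v1, w1, x1, w2, x2: if deleting(u1,v1,w1,x1) and deleting(w1,x1,w2,x2), then deleting(u1,v1,w2,x1) ∨ intersection(u1,v1,w1,w2). -/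
/-!
By F3 and F6 applied to the second deletion, `F w₁ x₁` is impossible, so neither u₁ nor v₁ is
adjacent to x₁. By C1 applied to the triangle of edges w₁x₁, x₁w₂, w₂w₁, neither of them then
lies in that triangle, and R1 turns a crossing of u₁v₁ with w₂x₁ into the edges u₁w₂, v₁w₂
that `deleting` asks for.

What remains is planar geometry: the segment u₁v₁ meets the side w₁x₁ of the triangle w₁x₁w₂
but has no endpoint in it, so it leaves the triangle through one of the other two sides. To
make this precise, `inter` is characterised as "the closed segments share a point that is not
an endpoint of both" (`inter_iff_segmentsMeet`); the exit point is found by walking from the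
meeting point with w₁x₁ towards the endpoint on w₂'s side of the line w₁x₁ and stopping where
one of the two other barycentric coordinates first vanishes. A degenerate triangle (w₂ on the line w₁x₁)
is handled directly.
-/

def area (a b c : Pt) : ℝ := pdet (b - a) (c - a)

def SegmentsMeet (u v w x : Pt) : Prop :=
  ∃ p ∈ segment ℝ u v ∩ segment ℝ w x, p ∉ ({u, v} : Set Pt) ∩ {w, x}

section Geometry

variable {a b c p p₀ u v w x y z z' : Pt}

theorem area_eq (a b c : Pt) :
    area a b c = (b.1 - a.1) * (c.2 - a.2) - (b.2 - a.2) * (c.1 - a.1) := rfl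

theorem area_rotate (a b c : Pt) : area b c a = area a b c := by
  simp only [area_eq]; ring

theorem area_swap (a b c : Pt) : area b a c = -area a b c := by
  simp only [area_eq]; ring

theorem area_swap_right (a b c : Pt) : area a c b = -area a b c := by
  simp only [area_eq]; ring

@[simp] theorem area_self_left (a b : Pt) : area a b a = 0 := by
  simp only [area_eq]; ring

@[simp] theorem area_self_right (a b : Pt) : area a b b = 0 := by
  simp only [area_eq]; ring

theorem area_add_smul_sub (a b p q : Pt) (t : ℝ) :
    area a b (p + t • (q - p)) = area a b p + t * (area a b q - area a b p) := by
  simp only [area_eq, Prod.fst_add, Prod.snd_add, Prod.fst_sub, Prod.snd_sub, Prod.smul_fst,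
    Prod.smul_snd, smul_eq_mul]
  ring

theorem area_sub_area (u v w x : Pt) :
    area u v w - area u v x = area w x v - area w x u := by
  simp only [area_eq]; ring

theorem area_add_area_add_area (a b c p : Pt) :
    area b c p + area c a p + area a b p = area a b c := by
  simp only [area_eq]; ring

theorem area_smul_eq (a b c p : Pt) :
    area a b c • p = area b c p • a + area c a p • b + area a b p • c := by
  ext <;> simp only [area_eq, Prod.fst_add, Prod.snd_add, Prod.smul_fst, Prod.smul_snd,
    smul_eq_mul] <;> ring

theorem area_smul_sub_area_smul (u v w x : Pt) :
    area u v w • x - area u v x • w = area w x v • u - area w x u • v := by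
  ext <;> simp only [area_eq, Prod.fst_sub, Prod.snd_sub, Prod.smul_fst, Prod.smul_snd,
    smul_eq_mul] <;> ring

theorem exists_sub_eq_smul_of_area_eq_zero (hab : a ≠ b) (h : area a b c = 0) :
    ∃ k : ℝ, c - a = k • (b - a) := by
  have hn : (b.1 - a.1) ^ 2 + (b.2 - a.2) ^ 2 ≠ 0 := by
    intro h0
    refine hab (Prod.ext ?_ ?_) <;> nlinarith [sq_nonneg (b.1 - a.1), sq_nonneg (b.2 - a.2)]
  rw [area_eq] at h
  refine ⟨((c.1 - a.1) * (b.1 - a.1) + (c.2 - a.2) * (b.2 - a.2)) /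
    ((b.1 - a.1) ^ 2 + (b.2 - a.2) ^ 2), Prod.ext ?_ ?_⟩ <;>
    simp only [Prod.fst_sub, Prod.snd_sub, Prod.smul_fst, Prod.smul_snd, smul_eq_mul] <;>
    rw [div_mul_eq_mul_div, eq_div_iff hn]
  · linear_combination (-(b.2 - a.2)) * h
  · linear_combination (b.1 - a.1) * h

theorem exists_add_smul_eq_of_mem_segment (h : p ∈ segment ℝ a b) :
    ∃ t ∈ Set.Icc (0 : ℝ) 1, a + t • (b - a) = p := by
  rwa [segment_eq_image'] at h

theorem area_eq_zero_of_mem_segment (h : p ∈ segment ℝ a b) : area a b p = 0 := by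
  obtain ⟨t, -, rfl⟩ := exists_add_smul_eq_of_mem_segment h
  rw [area_add_smul_sub]; simp

theorem smul_add_smul_mem_segment {d α β : ℝ} (a b : Pt) (hd : d ≠ 0) (hα : 0 ≤ α * d)
    (hβ : 0 ≤ β * d) (hsum : α + β = d) : d⁻¹ • (α • a + β • b) ∈ segment ℝ a b := by
  have weight (γ : ℝ) (hγ : 0 ≤ γ * d) : 0 ≤ γ / d := by
    rw [← mul_div_mul_right γ d hd]
    exact div_nonneg hγ (mul_self_nonneg d)
  refine ⟨α / d, β / d, weight α hα, weight β hβ, by rw [← add_div, hsum, div_self hd], ?_⟩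
  simp only [smul_add, smul_smul, div_eq_inv_mul]

theorem not_mem_pair_of_mem_openSegment (huv : u ≠ v) (hp : p ∈ openSegment ℝ u v) :
    p ∉ ({u, v} : Set Pt) := by
  rintro (rfl | rfl)
  · exact huv (left_mem_openSegment_iff.1 hp)
  · exact huv (right_mem_openSegment_iff.1 hp)

theorem left_of_area_pos (h : 0 < area a b c) : left a b c := Or.inl h

theorem left_of_sub_eq_smul {t : ℝ} (ht : 0 < t) (h : c - a = t • (b - a)) : left a b c :=
  Or.inr ⟨t, ht, h⟩

theorem area_nonneg_of_left (h : left a b c) : 0 ≤ area a b c := by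
  rcases h with h | ⟨t, -, h⟩
  · exact h.le
  · rw [← sub_add_cancel c a, h, add_comm, area_add_smul_sub]
    simp

theorem exists_sub_eq_smul_of_left (h : left a b c) (h0 : area a b c ≤ 0) :
    ∃ t : ℝ, 0 < t ∧ c - a = t • (b - a) :=
  h.resolve_left h0.not_gt

theorem not_left_self (hab : a ≠ b) : ¬left a b a := by
  rintro (h | ⟨t, ht, h⟩)
  · simp [pdet] at h
  · rw [sub_self, eq_comm, smul_eq_zero, sub_eq_zero] at h
    exact h.elim ht.ne' hab.symm

theorem left_of_mem_segment (h : p ∈ segment ℝ a b) (hpa : p ≠ a) : left a b p := by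
  obtain ⟨t, ⟨ht, -⟩, rfl⟩ := exists_add_smul_eq_of_mem_segment h
  refine left_of_sub_eq_smul (ht.lt_of_ne ?_) (by abel)
  rintro rfl
  simp at hpa

theorem inter_swap_left : inter v u w x ↔ inter u v w x := by
  unfold inter; tauto

theorem inter_swap_right : inter u v x w ↔ inter u v w x := by
  unfold inter; tauto

theorem inter_comm : inter w x u v ↔ inter u v w x := by
  unfold inter
  simp only [@eq_comm _ w u, @eq_comm _ x v, @eq_comm _ w v, @eq_comm _ x u]
  tauto

theorem segmentsMeet_swap_left : SegmentsMeet v u w x ↔ SegmentsMeet u v w x := by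
  simp only [SegmentsMeet, segment_symm ℝ v u, Set.pair_comm v u]

theorem segmentsMeet_swap_right : SegmentsMeet u v x w ↔ SegmentsMeet u v w x := by
  simp only [SegmentsMeet, segment_symm ℝ x w, Set.pair_comm x w]

theorem segmentsMeet_of_collinear {α β : ℝ} (huv : u ≠ v) (hw : w = u + α • (v - u))
    (hx : x = u + β • (v - u)) (hαβ : α ≠ β) (h : (0 < α ∧ β < 1) ∨ (0 < β ∧ α < 1)) :
    SegmentsMeet u v w x := by
  wlog hlt : α < β generalizing w x α β
  · exact segmentsMeet_swap_right.1
      (this hx hw hαβ.symm h.symm (hαβ.symm.lt_of_le (not_lt.1 hlt)))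
  have hβ : 0 < β := by rcases h with h | h <;> linarith [h.1]
  have hα : α < 1 := by rcases h with h | h <;> linarith [h.2]
  obtain ⟨t, hαt, htβ⟩ := exists_between (max_lt (lt_min one_pos hβ) (lt_min hα hlt))
  obtain ⟨ht0, hαt⟩ := max_lt_iff.1 hαt
  obtain ⟨ht1, htβ⟩ := lt_min_iff.1 htβ
  have hp : u + t • (v - u) ∈ openSegment ℝ u v := by
    rw [openSegment_eq_image']
    exact ⟨t, ⟨ht0, ht1⟩, rfl⟩
  refine ⟨u + t • (v - u), ⟨openSegment_subset_segment ℝ u v hp, ?_⟩,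
    fun h => not_mem_pair_of_mem_openSegment huv hp h.1⟩
  rw [segment_eq_image']
  refine ⟨(t - α) / (β - α), ⟨div_nonneg (by linarith) (by linarith),
    (div_le_one (by linarith)).2 (by linarith)⟩, ?_⟩
  subst hw hx
  have e : (t - α) / (β - α) * (β - α) = t - α := div_mul_cancel₀ _ (sub_ne_zero.2 hlt.ne')
  match_scalars
  · linear_combination -e
  · linear_combination e

theorem inter_of_collinear {α β : ℝ} (hw : w = u + α • (v - u)) (hx : x = u + β • (v - u))
    (hαβ : α < β) (hβ : 0 < β) (hα : α < 1) (hne : ¬(u = w ∧ v = x)) (hne' : ¬(u = x ∧ v = w)) :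
    inter u v w x := by
  have hβα : 0 < β - α := sub_pos.2 hαβ
  refine ⟨hne, hne', Or.inr ⟨left_of_sub_eq_smul hβ ?_, left_of_sub_eq_smul (sub_pos.2 hα) ?_⟩,
    Or.inr ⟨left_of_sub_eq_smul (div_pos (sub_pos.2 hα) hβα) ?_,
      left_of_sub_eq_smul (div_pos hβ hβα) ?_⟩⟩ <;>
  subst hw hx <;> match_scalars <;> field_simp <;> ring

theorem area_eq_zero_of_inter_self_left (huv : u ≠ v) (hux : u ≠ x) (h : inter u v u x) :
    area u v x = 0 := by
  obtain ⟨-, -, h3, h4⟩ := h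
  have h3' := area_nonneg_of_left (h3.resolve_left fun h => not_left_self huv h.1).1
  have h4' := area_nonneg_of_left (h4.resolve_left fun h => not_left_self hux h.1).1
  rw [area_swap_right] at h4'
  linarith

theorem collinear_of_inter_of_mem_endpoints (huv : u ≠ v) (hwx : w ≠ x) (h : inter u v w x)
    (hp : p ∈ ({u, v} : Set Pt) ∩ {w, x}) : area u v w = 0 ∧ area u v x = 0 := by
  obtain ⟨rfl | rfl, rfl | rfl⟩ := hp
  · exact ⟨area_self_left _ _, area_eq_zero_of_inter_self_left huv hwx h⟩
  · exact ⟨area_eq_zero_of_inter_self_left huv hwx.symm (inter_swap_right.2 h),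
      area_self_left _ _⟩
  · refine ⟨area_self_right _ _, ?_⟩
    rw [← neg_eq_zero, ← area_swap]
    exact area_eq_zero_of_inter_self_left huv.symm hwx (inter_swap_left.2 h)
  · refine ⟨?_, area_self_right _ _⟩
    rw [← neg_eq_zero, ← area_swap]
    exact area_eq_zero_of_inter_self_left huv.symm hwx.symm
      (inter_swap_left.2 (inter_swap_right.2 h))

theorem area_sides_of_left (h : (left a b c ∧ left b a p) ∨ (left a b p ∧ left b a c)) :
    (0 ≤ area a b c ∧ area a b p ≤ 0) ∨ (0 ≤ area a b p ∧ area a b c ≤ 0) := by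
  rcases h with ⟨h1, h2⟩ | ⟨h1, h2⟩
  · have := area_nonneg_of_left h2; rw [area_swap] at this
    exact Or.inl ⟨area_nonneg_of_left h1, by linarith⟩
  · have := area_nonneg_of_left h2; rw [area_swap] at this
    exact Or.inr ⟨area_nonneg_of_left h1, by linarith⟩

theorem segmentsMeet_of_inter_of_collinear (huv : u ≠ v) (hwx : w ≠ x) (h : inter u v w x)
    (hA : area u v w = 0) (hB : area u v x = 0) : SegmentsMeet u v w x := by
  have hB' : area v u x ≤ 0 := by rw [area_swap, hB, neg_zero]
  have hA' : area v u w ≤ 0 := by rw [area_swap, hA, neg_zero]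
  have along (c : ℝ) (y : Pt) (hy : y - v = c • (u - v)) : y = u + (1 - c) • (v - u) := by
    rw [← sub_add_cancel y v, hy]; module
  rcases h.2.2.1 with ⟨h1, h2⟩ | ⟨h1, h2⟩
  · obtain ⟨α, hα, hw⟩ := exists_sub_eq_smul_of_left h1 hA.le
    obtain ⟨c, hc, hx⟩ := exists_sub_eq_smul_of_left h2 hB'
    refine segmentsMeet_of_collinear huv (eq_add_of_sub_eq' hw) (along c x hx) ?_
      (Or.inl ⟨hα, by linarith⟩)
    rintro rfl
    exact hwx ((eq_add_of_sub_eq' hw).trans (along c x hx).symm)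
  · obtain ⟨β, hβ, hx⟩ := exists_sub_eq_smul_of_left h1 hB.le
    obtain ⟨c, hc, hw⟩ := exists_sub_eq_smul_of_left h2 hA'
    refine segmentsMeet_of_collinear huv (along c w hw) (eq_add_of_sub_eq' hx) ?_
      (Or.inr ⟨hβ, by linarith⟩)
    rintro rfl
    exact hwx ((along c w hw).trans (eq_add_of_sub_eq' hx).symm)

theorem segmentsMeet_of_inter (huv : u ≠ v) (hwx : w ≠ x) (h : inter u v w x) :
    SegmentsMeet u v w x := by
  by_cases hcol : area u v w = 0 ∧ area u v x = 0
  · exact segmentsMeet_of_inter_of_collinear huv hwx h hcol.1 hcol.2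
  have hid := area_sub_area u v w x
  have hD : area u v w - area u v x ≠ 0 := by
    intro h0
    rcases area_sides_of_left h.2.2.1 with h | h <;> exact hcol ⟨by linarith, by linarith⟩
  -- Cramer's rule: the common point of the lines uv and wx
  refine ⟨(area u v w - area u v x)⁻¹ • (area u v w • x - area u v x • w), ⟨?_, ?_⟩,
    fun hp => hcol (collinear_of_inter_of_mem_endpoints huv hwx h hp)⟩
  · rw [area_smul_sub_area_smul]
    convert smul_add_smul_mem_segment u v hD (α := area w x v) (β := -area w x u) ?_ ?_
      (by linarith) using 2
    · module
    all_goals rcases area_sides_of_left h.2.2.2 with h | h <;> nlinarith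
  · convert smul_add_smul_mem_segment w x hD (α := -area u v x) (β := area u v w) ?_ ?_
      (by linarith) using 2
    · module
    all_goals rcases area_sides_of_left h.2.2.1 with h | h <;> nlinarith

theorem sign_cases_of_add_mul_sub_eq_zero {A B s : ℝ} (hs0 : 0 ≤ s) (hs1 : s ≤ 1)
    (h : A + s * (B - A) = 0) (hAB : ¬(A = 0 ∧ B = 0)) :
    ((0 < A ∨ s = 0) ∧ (B < 0 ∨ s = 1)) ∨ ((0 < B ∨ s = 1) ∧ (A < 0 ∨ s = 0)) := by
  have h' : (1 - s) * A + s * B = 0 := by linarith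
  have hs : s = 0 → A = 0 := by rintro rfl; simpa using h
  have hs' : s = 1 → B = 0 := by rintro rfl; simpa using h'
  rcases lt_trichotomy A 0 with hA | rfl | hA <;> rcases lt_trichotomy B 0 with hB | rfl | hB
  · have hs0' : 0 < s := hs0.lt_of_ne fun h => hA.ne (hs h.symm)
    nlinarith [mul_nonpos_of_nonneg_of_nonpos (sub_nonneg.2 hs1) hA.le]
  · exact Or.inr ⟨Or.inr (by nlinarith), Or.inl hA⟩
  · exact Or.inr ⟨Or.inl hB, Or.inl hA⟩
  · exact Or.inl ⟨Or.inr (by nlinarith), Or.inl hB⟩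
  · exact absurd ⟨rfl, rfl⟩ hAB
  · exact Or.inr ⟨Or.inl hB, Or.inr (by nlinarith)⟩
  · exact Or.inl ⟨Or.inl hA, Or.inl hB⟩
  · exact Or.inl ⟨Or.inl hA, Or.inr (by nlinarith)⟩
  · have hs1' : s < 1 := hs1.lt_of_ne fun h => hB.ne' (hs' h)
    nlinarith [mul_nonneg hs0 hB.le]

theorem inter_of_mem_openSegment_of_collinear (huv : u ≠ v) (hwx : w ≠ x)
    (hne : ¬(u = w ∧ v = x)) (hne' : ¬(u = x ∧ v = w)) (hpuv : p ∈ openSegment ℝ u v)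
    (hpwx : p ∈ segment ℝ w x) (hA : area u v w = 0) (hB : area u v x = 0) :
    inter u v w x := by
  obtain ⟨t, ⟨ht0, ht1⟩, rfl⟩ : ∃ t ∈ Set.Ioo (0 : ℝ) 1, u + t • (v - u) = p := by
    rwa [openSegment_eq_image'] at hpuv
  obtain ⟨s, ⟨hs0, hs1⟩, hs⟩ := exists_add_smul_eq_of_mem_segment hpwx
  obtain ⟨α, hw⟩ := exists_sub_eq_smul_of_area_eq_zero huv hA
  obtain ⟨β, hx⟩ := exists_sub_eq_smul_of_area_eq_zero huv hB
  replace hw := eq_add_of_sub_eq' hw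
  replace hx := eq_add_of_sub_eq' hx
  have ht : t = α + s * (β - α) := by
    refine smul_left_injective ℝ (sub_ne_zero.2 huv.symm) ?_
    beta_reduce
    rw [← add_right_inj u, ← hs, hw, hx]
    module
  rcases lt_or_gt_of_ne fun hαβ : α = β => hwx (hw.trans (hαβ ▸ hx.symm)) with hαβ | hαβ
  · exact inter_of_collinear hw hx hαβ (by nlinarith) (by nlinarith) hne hne'
  · exact inter_swap_right.1
      (inter_of_collinear hx hw hαβ (by nlinarith) (by nlinarith) hne' hne)

theorem inter_of_mem_openSegment (huv : u ≠ v) (hwx : w ≠ x) (hne : ¬(u = w ∧ v = x))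
    (hne' : ¬(u = x ∧ v = w)) (hpuv : p ∈ openSegment ℝ u v) (hpwx : p ∈ segment ℝ w x) :
    inter u v w x := by
  by_cases hcol : area u v w = 0 ∧ area u v x = 0
  · exact inter_of_mem_openSegment_of_collinear huv hwx hne hne' hpuv hpwx hcol.1 hcol.2
  obtain ⟨t, ⟨ht0, ht1⟩, rfl⟩ : ∃ t ∈ Set.Ioo (0 : ℝ) 1, u + t • (v - u) = p := by
    rwa [openSegment_eq_image'] at hpuv
  obtain ⟨s, ⟨hs0, hs1⟩, hs⟩ := exists_add_smul_eq_of_mem_segment hpwx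
  have hpA : area u v w + s * (area u v x - area u v w) = 0 := by
    rw [← area_add_smul_sub, hs, area_add_smul_sub]; simp
  have hpC : area w x u + t * (area w x v - area w x u) = 0 := by
    rw [← area_add_smul_sub, ← hs, area_add_smul_sub]; simp
  refine ⟨hne, hne', ?_, ?_⟩
  · have hLuv (y : Pt) (hy : 0 < area u v y ∨ y = u + t • (v - u)) : left u v y := by
      rcases hy with hy | rfl
      exacts [left_of_area_pos hy, left_of_sub_eq_smul ht0 (by abel)]
    have hLvu (y : Pt) (hy : area u v y < 0 ∨ y = u + t • (v - u)) : left v u y := by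
      rcases hy with hy | rfl
      exacts [left_of_area_pos (by rw [area_swap]; linarith),
        left_of_sub_eq_smul (sub_pos.2 ht1) (by module)]
    have hs0w : s = 0 → w = u + t • (v - u) := by rintro rfl; simpa using hs
    have hs1x : s = 1 → x = u + t • (v - u) := by rintro rfl; simpa using hs
    rcases sign_cases_of_add_mul_sub_eq_zero hs0 hs1 hpA hcol with ⟨hw, hx⟩ | ⟨hx, hw⟩
    · exact Or.inl ⟨hLuv w (hw.imp_right hs0w), hLvu x (hx.imp_right hs1x)⟩
    · exact Or.inr ⟨hLuv x (hx.imp_right hs1x), hLvu w (hw.imp_right hs0w)⟩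
  · have hid := area_sub_area u v w x
    rcases lt_trichotomy (area w x u) 0 with hC | hC | hC
    · refine Or.inr ⟨left_of_area_pos (by nlinarith), left_of_area_pos ?_⟩
      rw [area_swap]; linarith
    · have hDv : area w x v = 0 :=
        (mul_eq_zero.1 (by rw [hC] at hpC; linarith)).resolve_left ht0.ne'
      exact absurd ⟨by nlinarith, by nlinarith⟩ hcol
    · refine Or.inl ⟨left_of_area_pos hC, left_of_area_pos ?_⟩
      rw [area_swap]; nlinarith

theorem inter_of_segmentsMeet (huv : u ≠ v) (hwx : w ≠ x) (hne : ¬(u = w ∧ v = x))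
    (hne' : ¬(u = x ∧ v = w)) (h : SegmentsMeet u v w x) : inter u v w x := by
  obtain ⟨p, ⟨hpuv, hpwx⟩, hend⟩ := h
  by_cases hp : p ∈ ({u, v} : Set Pt)
  · have hp' : p ∈ openSegment ℝ w x :=
      mem_openSegment_of_ne_left_right (fun h => hend ⟨hp, Or.inl h.symm⟩)
        (fun h => hend ⟨hp, Or.inr h.symm⟩) hpwx
    exact inter_comm.1 (inter_of_mem_openSegment hwx huv (fun h => hne ⟨h.1.symm, h.2.symm⟩)
      (fun h => hne' ⟨h.2.symm, h.1.symm⟩) hp' hpuv)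
  · exact inter_of_mem_openSegment huv hwx hne hne'
      (mem_openSegment_of_ne_left_right (fun h => hp (Or.inl h.symm))
        (fun h => hp (Or.inr h.symm)) hpuv) hpwx

theorem inter_iff_segmentsMeet (huv : u ≠ v) (hwx : w ≠ x) :
    inter u v w x ↔ ¬(u = w ∧ v = x) ∧ ¬(u = x ∧ v = w) ∧ SegmentsMeet u v w x :=
  ⟨fun h => ⟨h.1, h.2.1, segmentsMeet_of_inter huv hwx h⟩,
    fun ⟨hne, hne', h⟩ => inter_of_segmentsMeet huv hwx hne hne' h⟩

theorem mem_segment_of_area_eq_zero (hD : 0 < area a b c) (h : area a b p = 0)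
    (hbc : 0 ≤ area b c p) (hca : 0 ≤ area c a p) : p ∈ segment ℝ a b := by
  convert smul_add_smul_mem_segment a b hD.ne' (mul_nonneg hbc hD.le) (mul_nonneg hca hD.le)
    (by linarith [area_add_area_add_area a b c p]) using 1
  rw [eq_inv_smul_iff₀ hD.ne', area_smul_eq, h, zero_smul, add_zero]

theorem left_of_area_nonneg (hD : 0 < area a b c) (hab : 0 ≤ area a b p)
    (hbc : 0 ≤ area b c p) (hca : 0 ≤ area c a p) (hpa : p ≠ a) : left a b p := by
  rcases hab.lt_or_eq with h | h
  · exact left_of_area_pos h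
  · exact left_of_mem_segment (mem_segment_of_area_eq_zero hD h.symm hbc hca) hpa

theorem inside_of_area_nonneg (hD : 0 < area w x y) (hf : 0 ≤ area w x p)
    (hg : 0 ≤ area x y p) (hh : 0 ≤ area y w p) (hpw : p ≠ w) (hpx : p ≠ x) (hpy : p ≠ y) :
    inside w x y p :=
  ⟨left_of_area_nonneg hD hf hg hh hpw,
    left_of_area_nonneg (by rwa [area_rotate]) hg hh hf hpx,
    left_of_area_nonneg (by rwa [area_rotate, area_rotate]) hh hf hg hpy⟩

theorem exists_exit_param {g₀ h₀ g₁ h₁ : ℝ} (hg₀ : 0 ≤ g₀) (hh₀ : 0 ≤ h₀)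
    (hneg : g₁ < 0 ∨ h₁ < 0) :
    ∃ s ∈ Set.Icc (0 : ℝ) 1, 0 ≤ g₀ + s * (g₁ - g₀) ∧ 0 ≤ h₀ + s * (h₁ - h₀) ∧
      (g₀ + s * (g₁ - g₀) = 0 ∨ h₀ + s * (h₁ - h₀) = 0) := by
  -- `h₀ * g₁ ≤ g₀ * h₁` says that `g` reaches zero no later than `h`
  wlog hfirst : g₁ < 0 ∧ h₀ * g₁ ≤ g₀ * h₁ generalizing g₀ h₀ g₁ h₁
  · have hh₁ : h₁ < 0 := by
      by_contra hh₁
      have hg₁ := hneg.resolve_right hh₁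
      exact hfirst ⟨hg₁, by nlinarith [mul_nonneg hg₀ (not_lt.1 hh₁)]⟩
    obtain ⟨s, hs, hg, hh, hzero⟩ := this hh₀ hg₀ hneg.symm ⟨hh₁, by
      rcases le_or_gt 0 g₁ with hg₁ | hg₁
      · nlinarith
      · linarith [not_and.1 hfirst hg₁]⟩
    exact ⟨s, hs, hh, hg, hzero.symm⟩
  obtain ⟨hg₁, hcmp⟩ := hfirst
  have hd : 0 < g₀ - g₁ := by linarith
  refine ⟨g₀ / (g₀ - g₁), ⟨div_nonneg hg₀ hd.le, (div_le_one hd).2 (by linarith)⟩, ?_⟩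
  have hG : g₀ + g₀ / (g₀ - g₁) * (g₁ - g₀) = 0 := by field_simp; ring
  have hH : h₀ + g₀ / (g₀ - g₁) * (h₁ - h₀) = (g₀ * h₁ - h₀ * g₁) / (g₀ - g₁) := by
    field_simp; ring
  exact ⟨hG.ge, hH ▸ div_nonneg (by linarith) hd.le, Or.inl hG⟩

theorem area_nonneg_of_mem_segment (hD : 0 < area w x y) (h : p ∈ segment ℝ w x) :
    0 ≤ area x y p ∧ 0 ≤ area y w p := by
  obtain ⟨r, ⟨hr0, hr1⟩, rfl⟩ := exists_add_smul_eq_of_mem_segment h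
  rw [area_add_smul_sub, area_rotate w x y, area_self_left, area_add_smul_sub, area_self_right,
    area_rotate x y w, area_rotate w x y]
  constructor <;> nlinarith

theorem segmentsMeet_of_exit (hD : 0 < area w x y) (hp₀ : p₀ ∈ segment ℝ z' z)
    (hp₀wx : p₀ ∈ segment ℝ w x) (hp₀end : p₀ ∉ ({z', z} : Set Pt) ∩ {w, x})
    (hz : 0 ≤ area w x z) (hzT : area x y z < 0 ∨ area y w z < 0) (hz' : z' ≠ y) :
    SegmentsMeet z' z x y ∨ SegmentsMeet z' z y w := by
  have hf₀ := area_eq_zero_of_mem_segment hp₀wx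
  obtain ⟨hg₀, hh₀⟩ := area_nonneg_of_mem_segment hD hp₀wx
  -- the walk from `p₀` towards `z` leaves the triangle `w x y` at `p₀ + s • (z - p₀)`
  obtain ⟨s, ⟨hs0, hs1⟩, hg, hh, hzero⟩ := exists_exit_param hg₀ hh₀ hzT
  rw [← area_add_smul_sub] at hg hh
  rw [← area_add_smul_sub, ← area_add_smul_sub] at hzero
  have hf : 0 ≤ area w x (p₀ + s • (z - p₀)) := by rw [area_add_smul_sub, hf₀]; positivity
  have hp' : p₀ + s • (z - p₀) ∈ segment ℝ p₀ z := by
    rw [segment_eq_image']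
    exact ⟨s, ⟨hs0, hs1⟩, rfl⟩
  generalize p₀ + s • (z - p₀) = p at hg hh hzero hf hp'
  have hp : p ∈ segment ℝ z' z :=
    (convex_segment z' z).segment_subset hp₀ (right_mem_segment ℝ z' z) hp'
  have hpz : p ≠ z := by
    rintro rfl
    rcases hzT with h | h <;> linarith
  have hvertex : p ∈ ({z', z} : Set Pt) → p ≠ w ∧ p ≠ x ∧ p ≠ y := by
    rintro (rfl | hpz')
    · have hp₀p : p = p₀ := (wbtw_swap_left_iff ℝ z).1
        ⟨mem_segment_iff_wbtw.1 hp₀, mem_segment_iff_wbtw.1 hp'⟩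
      subst hp₀p
      exact ⟨fun h => hp₀end ⟨Or.inl rfl, Or.inl h⟩, fun h => hp₀end ⟨Or.inl rfl, Or.inr h⟩, hz'⟩
    · exact absurd hpz' hpz
  rcases hzero with hg0 | hh0
  · refine Or.inl ⟨p, ⟨hp, mem_segment_of_area_eq_zero (by rwa [area_rotate]) hg0 hh hf⟩,
      fun ⟨h1, h2⟩ => ?_⟩
    obtain ⟨-, hx, hy⟩ := hvertex h1
    rcases h2 with h2 | h2 <;> contradiction
  · refine Or.inr ⟨p, ⟨hp, mem_segment_of_area_eq_zero (by rwa [area_rotate, area_rotate]) hh0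
      hf hg⟩, fun ⟨h1, h2⟩ => ?_⟩
    obtain ⟨hw, -, hy⟩ := hvertex h1
    rcases h2 with h2 | h2 <;> contradiction

theorem area_nonneg_or_area_nonneg_of_mem_segment (hp : p ∈ segment ℝ u v)
    (h : area a b p = 0) : 0 ≤ area a b u ∨ 0 ≤ area a b v := by
  obtain ⟨t, ⟨ht0, ht1⟩, rfl⟩ := exists_add_smul_eq_of_mem_segment hp
  rw [area_add_smul_sub] at h
  by_contra! hneg
  rcases le_total (area a b u) (area a b v) with h' | h' <;>
    nlinarith [mul_nonneg (sub_nonneg.2 ht1) (sub_nonneg.2 h'), mul_nonneg ht0 (sub_nonneg.2 h')]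

theorem area_eq_zero_of_mem_segment_of_ne (hp : p ∈ segment ℝ u v) (h : area a b p = 0)
    (hv : area a b v = 0) (hpv : p ≠ v) : area a b u = 0 := by
  obtain ⟨t, -, rfl⟩ := exists_add_smul_eq_of_mem_segment hp
  rw [area_add_smul_sub, hv] at h
  have ht : 1 - t ≠ 0 := by
    rintro ht
    rw [← eq_of_sub_eq_zero ht] at hpv
    simp at hpv
  exact (mul_eq_zero.1 (by linarith : (1 - t) * area a b u = 0)).resolve_left ht

theorem segmentsMeet_of_area_pos (hD : 0 < area w x y) (huv : u ≠ v) (hne : ¬(u = w ∧ v = x))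
    (hne' : ¬(u = x ∧ v = w)) (hm : SegmentsMeet u v w x) (hu : u ≠ y) (hv : v ≠ y)
    (hiu : ¬inside w x y u) (hiv : ¬inside w x y v) :
    SegmentsMeet u v x y ∨ SegmentsMeet u v y w := by
  obtain ⟨p₀, ⟨hp₀uv, hp₀wx⟩, hp₀end⟩ := hm
  have hf₀ := area_eq_zero_of_mem_segment hp₀wx
  wlog hfv : 0 ≤ area w x v generalizing u v
  · have hfu := (area_nonneg_or_area_nonneg_of_mem_segment hp₀uv hf₀).resolve_right hfv
    rw [segment_symm] at hp₀uv
    rw [Set.pair_comm] at hp₀end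
    exact (this huv.symm (fun h => hne' ⟨h.2, h.1⟩) (fun h => hne ⟨h.2, h.1⟩) hv hu hiv hiu
      hp₀end hp₀uv hfu).imp segmentsMeet_swap_left.1 segmentsMeet_swap_left.1
  have hout (z : Pt) (hiz : ¬inside w x y z) (hzy : z ≠ y) (hzwx : z ∉ ({w, x} : Set Pt))
      (hfz : 0 ≤ area w x z) : area x y z < 0 ∨ area y w z < 0 := by
    by_contra! h
    exact hiz (inside_of_area_nonneg hD hfz h.1 h.2 (fun h => hzwx (Or.inl h))
      (fun h => hzwx (Or.inr h)) hzy)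
  by_cases hvwx : v ∈ ({w, x} : Set Pt)
  · -- then `p₀ ≠ v`, so `uv` runs along the line `wx` and we walk towards `u` instead
    have huwx : u ∉ ({w, x} : Set Pt) := by
      rintro (rfl | rfl) <;> rcases hvwx with rfl | rfl <;> simp_all
    have hfv0 : area w x v = 0 := by rcases hvwx with rfl | rfl <;> simp
    have hfu := area_eq_zero_of_mem_segment_of_ne hp₀uv hf₀ hfv0
      (by rintro rfl; exact hp₀end ⟨Or.inr rfl, hvwx⟩)
    rw [segment_symm] at hp₀uv
    rw [Set.pair_comm] at hp₀end
    exact (segmentsMeet_of_exit hD hp₀uv hp₀wx hp₀end hfu.ge (hout u hiu hu huwx hfu.ge)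
      hv).imp segmentsMeet_swap_left.1 segmentsMeet_swap_left.1
  · exact segmentsMeet_of_exit hD hp₀uv hp₀wx hp₀end hfv (hout v hiv hv hvwx hfv) hu

theorem segmentsMeet_of_area_eq_zero (hwx : w ≠ x) (hD : area w x y = 0)
    (hm : SegmentsMeet u v w x) (hu : u ≠ y) (hv : v ≠ y) :
    SegmentsMeet u v y x ∨ SegmentsMeet u v w y := by
  obtain ⟨k, hk⟩ := exists_sub_eq_smul_of_area_eq_zero hwx hD
  obtain rfl := eq_add_of_sub_eq' hk
  obtain ⟨p₀, ⟨hp₀uv, hp₀wx⟩, hp₀end⟩ := hm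
  have hend (h : p₀ ∈ ({u, v} : Set Pt)) : p₀ ≠ w ∧ p₀ ≠ x ∧ p₀ ≠ w + k • (x - w) :=
    ⟨fun h' => hp₀end ⟨h, Or.inl h'⟩, fun h' => hp₀end ⟨h, Or.inr h'⟩,
      by rintro rfl; rcases h with rfl | rfl <;> simp_all⟩
  obtain ⟨s, ⟨hs0, hs1⟩, rfl⟩ := exists_add_smul_eq_of_mem_segment hp₀wx
  rcases le_or_gt s k with hsk | hks
  · refine Or.inr ⟨_, ⟨hp₀uv, ?_⟩, fun ⟨h1, h2⟩ => ?_⟩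
    · rcases hs0.eq_or_lt with rfl | hs0
      · simpa using left_mem_segment ℝ w (w + k • (x - w))
      have hk0 : 0 < k := by linarith
      rw [segment_eq_image']
      refine ⟨s / k, ⟨by positivity, (div_le_one hk0).2 hsk⟩, ?_⟩
      simp only [add_sub_cancel_left, smul_smul, div_mul_cancel₀ s hk0.ne']
    · obtain ⟨hw, -, hy⟩ := hend h1
      rcases h2 with h2 | h2 <;> contradiction
  · refine Or.inl ⟨_, ⟨hp₀uv, ?_⟩, fun ⟨h1, h2⟩ => ?_⟩
    · rw [segment_eq_image']
      refine ⟨(s - k) / (1 - k), ⟨div_nonneg (by linarith) (by linarith),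
        (div_le_one (by linarith)).2 (by linarith)⟩, ?_⟩
      have e : (s - k) / (1 - k) * (1 - k) = s - k := div_mul_cancel₀ _ (by linarith)
      match_scalars
      · linear_combination -e
      · linear_combination e
    · obtain ⟨-, hx, hy⟩ := hend h1
      rcases h2 with h2 | h2 <;> contradiction

theorem inter_or_inter_of_not_inside (huv : u ≠ v) (hwx : w ≠ x) (hyw : y ≠ w) (hyx : y ≠ x)
    (hu : u ≠ y) (hv : v ≠ y) (hI : inter u v w x)
    (hiu : ¬inside w x y u) (hiu' : ¬inside x w y u)
    (hiv : ¬inside w x y v) (hiv' : ¬inside x w y v) :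
    inter u v y x ∨ inter u v w y := by
  obtain ⟨hne, hne', hm⟩ := (inter_iff_segmentsMeet huv hwx).1 hI
  suffices h : SegmentsMeet u v y x ∨ SegmentsMeet u v w y by
    refine h.imp (fun h => (inter_iff_segmentsMeet huv hyx).2 ⟨?_, ?_, h⟩)
      (fun h => (inter_iff_segmentsMeet huv hyw.symm).2 ⟨?_, ?_, h⟩) <;>
    rintro ⟨rfl, rfl⟩ <;> simp_all
  rcases lt_trichotomy (area w x y) 0 with hD | hD | hD
  · rw [← neg_pos, ← area_swap] at hD
    exact (segmentsMeet_of_area_pos hD huv hne' hne (segmentsMeet_swap_right.2 hm) hu hv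
      hiu' hiv').symm
  · exact segmentsMeet_of_area_eq_zero hwx hD hm hu hv
  · exact (segmentsMeet_of_area_pos hD huv hne hne' hm hu hv hiu hiv).imp
      segmentsMeet_swap_right.1 segmentsMeet_swap_right.1

end Geometry

theorem not_inside_of_not_adj {V : Pt → Prop} {E : Pt → Pt → Prop} {p w x y : Pt}
    (hE2 : ∀ u v, E u v → E v u)
    (hC1 : ∀ u v w x, inside u v w x ∧ E u v ∧ E v w ∧ E w u ∧ V x → E u x)
    (hwx : E w x) (hxy : E x y) (hwy : E w y) (hV : V p) (hp : ¬E p x) :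
    ¬inside w x y p ∧ ¬inside x w y p :=
  ⟨fun hin => hp (hE2 _ _ (hC1 x y w p ⟨⟨hin.2.1, hin.2.2, hin.1⟩, hxy, hE2 _ _ hwy, hwx, hV⟩)),
    fun hin => hp (hE2 _ _ (hC1 x w y p ⟨hin, hE2 _ _ hwx, hwy, hE2 _ _ hxy, hV⟩))⟩

theorem proof_step1_general
    (V : Pt → Prop) (E F : Pt → Pt → Prop)
    (hE1 : ∀ u, ¬ E u u)
    (hE2 : ∀ u v, E u v → E v u)
    (hE3 : ∀ u v, E u v → V u ∧ V v)
    (hR1 : ∀ u v w x, E u v ∧ E w x ∧ inter u v w x → E u w ∨ E v x)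
    (hC1 : ∀ u v w x, inside u v w x ∧ E u v ∧ E v w ∧ E w u ∧ V x → E u x)
    (hF3 : ∀ u v w x, F u v ∧ F w x → ¬ inter u v w x)
    (hF6 : ∀ u v w x, F u v ∧ E w x ∧ inter u v w x → E u x ∨ E v x)
    (u1 v1 w1 x1 w2 x2 : Pt)
    (h1 : deleting E F u1 v1 w1 x1)
    (h2 : deleting E F w1 x1 w2 x2) :
    deleting E F u1 v1 w2 x1 ∨ inter u1 v1 w1 w2 := by
  obtain ⟨hEuv, hEwx, hI, hEuw, hEvw, hdel⟩ := h1
  obtain ⟨-, hEw₂x₂, hI₂, hEw₁w₂, hEx₁w₂, hdel₂⟩ := h2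
  have hx₁ : ¬E u1 x1 ∧ ¬E v1 x1 := by
    refine hdel.resolve_right fun hF => ?_
    rcases hdel₂ with ⟨hw₁x₂, hx₁x₂⟩ | hF₂
    · exact (hF6 _ _ _ _ ⟨hF, hEw₂x₂, hI₂⟩).elim hw₁x₂ hx₁x₂
    · exact hF3 _ _ _ _ ⟨hF, hF₂⟩ hI₂
  have ne_of_E {a b : Pt} (h : E a b) : a ≠ b := fun hab => hE1 b (hab ▸ h)
  have ne_w₂ {p : Pt} (hp : ¬E p x1) : p ≠ w2 := fun h => hp (hE2 _ _ (h ▸ hEx₁w₂))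
  have hiu := not_inside_of_not_adj hE2 hC1 hEwx hEx₁w₂ hEw₁w₂ (hE3 _ _ hEuv).1 hx₁.1
  have hiv := not_inside_of_not_adj hE2 hC1 hEwx hEx₁w₂ hEw₁w₂ (hE3 _ _ hEuv).2 hx₁.2
  rcases inter_or_inter_of_not_inside (ne_of_E hEuv) (ne_of_E hEwx) (ne_of_E hEw₁w₂).symm
    (ne_of_E hEx₁w₂).symm (ne_w₂ hx₁.1) (ne_w₂ hx₁.2) hI hiu.1 hiu.2 hiv.1 hiv.2 with hI' | hI'
  · have hEw₂x₁ := hE2 _ _ hEx₁w₂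
    refine Or.inl ⟨hEuv, hEw₂x₁, hI', ?_, ?_, Or.inl hx₁⟩
    · exact (hR1 u1 v1 w2 x1 ⟨hEuv, hEw₂x₁, hI'⟩).resolve_right hx₁.2
    · exact (hR1 v1 u1 w2 x1 ⟨hE2 _ _ hEuv, hEw₂x₁, inter_swap_left.2 hI'⟩).resolve_right hx₁.1
  · exact Or.inr hI'

theorem proof_step1
    (V : Pt → Prop) (E F : Pt → Pt → Prop)
    (hE1 : ∀ u, ¬ E u u)
    (hE2 : ∀ u v, E u v → E v u)
    (hE3 : ∀ u v, E u v → V u ∧ V v)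
    (hR1 : ∀ u v w x, E u v ∧ E w x ∧ inter u v w x → E u w ∨ E v x)
    (hC1 : ∀ u v w x, inside u v w x ∧ E u v ∧ E v w ∧ E w u ∧ V x → E u x)
    (hF1 : ∀ u v, F u v → F v u)
    (hF2 : ∀ u v, F u v → E u v)
    (hF3 : ∀ u v w x, F u v ∧ F w x → ¬ inter u v w x)
    (hF4 : ∀ u v w, left u v w ∧ left v u w ∧ V w → ¬ F u v)
    (hF5 : ∀ u v w x, F u v ∧ E w x ∧ inter u v w x → E u w ∨ E v w)
    (hF6 : ∀ u v w x, F u v ∧ E w x ∧ inter u v w x → E u x ∨ E v x)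
    (u1 v1 w1 x1 w2 x2 : Pt)
    (h1 : deleting E F u1 v1 w1 x1)
    (h2 : deleting E F w1 x1 w2 x2) :
    deleting E F u1 v1 w2 x1 ∨ inter u1 v1 w1 w2 :=
  proof_step1_general V E F hE1 hE2 hE3 hR1 hC1 hF3 hF6 u1 v1 w1 x1 w2 x2 h1 h2
end
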